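/- Let E and F be Hilbert spaces and (A_α)_{α∈ℕ} a countable family of bounded linear operators from E to F. Assume there exists R > 0 such that sup_α Σ_β ‖A_α* A_β‖^{1/2} ≤ R and sup_α Σ_β ‖A_α A_β*‖^{1/2} ≤ R. Then the sum A = Σ_α A_α converges strongly to a bounded operator with ‖A‖ ≤ R. -/

import Mathlib

/-!
For finite `S` put `T = ∑_{j ∈ S} A_j`. Then `T† T = ∑_{j,k} A_j† A_k`, so `(T† T)^m` is the sum
of the words `A_{j₁}† A_{k₁} ⋯ A_{jₘ}† A_{kₘ}`. Such a word is bounded both by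
`∏ ‖A_{jᵢ}† A_{kᵢ}‖` and, bracketing the other way, by `‖A_{j₁}‖ ‖A_{k₁} A_{j₂}†‖ ⋯ ‖A_{kₘ}‖`.
Bounding it by the geometric mean of the two and summing out one index at a time against the row
bounds gives `‖(T† T)^m‖ ≤ #S R^{2m}`; for `m = 2^n` the C*-identity turns the left side into
`‖T‖^{2m}`, and letting `n → ∞` gives `‖T‖ ≤ R`.

For the infinite family the partial sums are therefore bounded by `R`, so the vectors `x` for which
`∑ A_j x` converges form a closed subspace. It contains every `A_k† y`, since
`‖A_j A_k†‖ ≤ R √‖A_k A_j†‖` is summable in `j`, and a vector orthogonal to all of these is killed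
by every `A_k`; so the subspace is everything.
-/

open scoped InnerProduct

open ContinuousLinearMap Finset

/-- `s.wordSum m g` is the sum of `g l` over all lists `l` of length `m` with entries in `s`. -/
def Finset.wordSum {κ M : Type*} [AddCommMonoid M] (s : Finset κ) : ℕ → (List κ → M) → M
  | 0, g => g []
  | m + 1, g => ∑ p ∈ s, wordSum s m fun l => g (p :: l)

namespace Finset

variable {κ M : Type*} (s : Finset κ)

theorem mul_wordSum [NonUnitalNonAssocSemiring M] (a : M) (m : ℕ) (g : List κ → M) :
    a * s.wordSum m g = s.wordSum m fun l => a * g l := by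
  induction m generalizing g with
  | zero => rfl
  | succ m ih => simp only [wordSum, mul_sum, ih]

theorem sum_pow_eq_wordSum [Semiring M] (G : κ → M) (m : ℕ) :
    (∑ p ∈ s, G p) ^ m = s.wordSum m fun l => (l.map G).prod := by
  induction m with
  | zero => simp [wordSum]
  | succ m ih =>
    rw [pow_succ', ih, sum_mul]
    simp only [mul_wordSum, wordSum, List.map_cons, List.prod_cons]

theorem norm_wordSum_le [SeminormedAddCommGroup M] (m : ℕ) (g : List κ → M) :
    ‖s.wordSum m g‖ ≤ s.wordSum m fun l => ‖g l‖ := by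
  induction m generalizing g with
  | zero => rfl
  | succ m ih => exact (norm_sum_le _ _).trans (sum_le_sum fun p _ => ih _)

theorem wordSum_mono [AddCommMonoid M] [PartialOrder M] [IsOrderedAddMonoid M] (m : ℕ)
    {f g : List κ → M} (h : ∀ l, f l ≤ g l) : s.wordSum m f ≤ s.wordSum m g := by
  induction m generalizing f g with
  | zero => exact h []
  | succ m ih => exact sum_le_sum fun p _ => ih fun l => h (p :: l)

end Finset

theorem le_of_forall_pow_two_pow_le_mul_pow {x y C : ℝ} (hy : 0 ≤ y)
    (h : ∀ n : ℕ, x ^ 2 ^ n ≤ C * y ^ 2 ^ n) : x ≤ y := by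
  rcases hy.eq_or_lt with rfl | hy
  · simpa using h 0
  by_contra! hxy
  have hexp := (tendsto_pow_atTop_atTop_of_one_lt ((one_lt_div hy).2 hxy)).comp
    (tendsto_pow_atTop_atTop_of_one_lt (one_lt_two : 1 < 2))
  obtain ⟨n, hn⟩ := (hexp.eventually_gt_atTop C).exists
  rw [Function.comp_apply, div_pow, lt_div_iff₀ (by positivity)] at hn
  exact (h n).not_gt hn

section Adjoint

variable {𝕜 E F : Type*} [RCLike 𝕜] [NormedAddCommGroup E] [InnerProductSpace 𝕜 E]
  [CompleteSpace E] [NormedAddCommGroup F] [InnerProductSpace 𝕜 F] [CompleteSpace F]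

theorem ContinuousLinearMap.norm_adjoint_comp_self_pow_two_pow (T : E →L[𝕜] F) (n : ℕ) :
    ‖(T† ∘L T) ^ 2 ^ n‖ = (‖T‖ ^ 2) ^ 2 ^ n := by
  rw [T.isPositive_adjoint_comp_self.isSelfAdjoint.norm_pow_two_pow, norm_adjoint_comp_self, sq]

theorem ContinuousLinearMap.norm_comp_adjoint_comm (S T : E →L[𝕜] F) :
    ‖S ∘L T†‖ = ‖T ∘L S†‖ := by
  rw [← LinearIsometryEquiv.norm_map adjoint, adjoint_comp, adjoint_adjoint]

end Adjoint

section StrongSum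

variable {𝕜 E F ι : Type*} [NontriviallyNormedField 𝕜] [SeminormedAddCommGroup E]
  [NormedSpace 𝕜 E] [NormedAddCommGroup F] [NormedSpace 𝕜 F]
  {f : ι → E →L[𝕜] F} {C : ℝ}

theorem isClosed_setOf_summable_apply [CompleteSpace F]
    (hf : ∀ s : Finset ι, ‖∑ j ∈ s, f j‖ ≤ C) :
    IsClosed {x | Summable fun j => f j x} := by
  have hC : 0 ≤ C := by simpa using hf ∅
  refine isClosed_of_closure_subset fun x hx => summable_iff_vanishing_norm.2 fun ε hε => ?_
  obtain ⟨y, hy, hxy⟩ := Metric.mem_closure_iff.1 hx (ε / (2 * (C + 1))) (by positivity)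
  obtain ⟨s, hs⟩ := summable_iff_vanishing_norm.1 hy (ε / 2) (by positivity)
  refine ⟨s, fun t ht => ?_⟩
  have hCε : C * (ε / (2 * (C + 1))) ≤ ε / 2 := by
    rw [mul_div_assoc', div_le_div_iff₀ (by positivity) two_pos]
    nlinarith
  calc ‖∑ j ∈ t, f j x‖ = ‖(∑ j ∈ t, f j) (x - y) + ∑ j ∈ t, f j y‖ := by
        simp only [_root_.sum_apply, map_sub, sub_add_cancel]
    _ ≤ C * ‖x - y‖ + ‖∑ j ∈ t, f j y‖ :=
        norm_add_le_of_le ((∑ j ∈ t, f j).le_of_opNorm_le (hf t) _) le_rfl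
    _ ≤ C * (ε / (2 * (C + 1))) + ‖∑ j ∈ t, f j y‖ := by
        rw [← dist_eq_norm]
        gcongr
    _ < ε / 2 + ε / 2 := add_lt_add_of_le_of_lt hCε (hs t ht)
    _ = ε := add_halves ε

theorem exists_hasSum_apply_of_norm_sum_le (hf : ∀ s : Finset ι, ‖∑ j ∈ s, f j‖ ≤ C)
    (hs : ∀ x, Summable fun j => f j x) :
    ∃ T : E →L[𝕜] F, (∀ x, HasSum (fun j => f j x) (T x)) ∧ ‖T‖ ≤ C := by
  let L : E →ₗ[𝕜] F :=
    { toFun x := ∑' j, f j x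
      map_add' x y := by simp only [map_add]; exact (hs x).tsum_add (hs y)
      map_smul' c x := by simp only [map_smul]; exact (hs x).tsum_const_smul c }
  have hL (x : E) : ‖L x‖ ≤ C * ‖x‖ :=
    le_of_tendsto' (hs x).hasSum.norm fun t => by
      simpa only [_root_.sum_apply] using (∑ j ∈ t, f j).le_of_opNorm_le (hf t) x
  exact ⟨L.mkContinuous C hL, fun x => (hs x).hasSum,
    L.mkContinuous_norm_le (by simpa using hf ∅) hL⟩

end StrongSum

section HilbertSum

variable {𝕜 E F ι : Type*} [RCLike 𝕜] [NormedAddCommGroup E] [InnerProductSpace 𝕜 E]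
  [CompleteSpace E] [NormedAddCommGroup F] [InnerProductSpace 𝕜 F] [CompleteSpace F]
  {f : ι → E →L[𝕜] F}

theorem summable_apply_of_summable_apply_adjoint {C : ℝ}
    (hf : ∀ s : Finset ι, ‖∑ j ∈ s, f j‖ ≤ C)
    (hadj : ∀ k y, Summable fun j => f j (((f k)†) y)) (x : E) : Summable fun j => f j x := by
  let V : Submodule 𝕜 E :=
    { carrier := {x | Summable fun j => f j x}
      add_mem' hx hy := show Summable _ by simpa only [map_add] using hx.add hy
      zero_mem' := show Summable _ by simpa only [map_zero] using summable_zero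
      smul_mem' c _ hx := show Summable _ by simpa only [map_smul] using hx.const_smul c }
  have : CompleteSpace V := (isClosed_setOf_summable_apply hf).completeSpace_coe
  have hV : Vᗮ = ⊥ := by
    refine (Submodule.eq_bot_iff _).2 fun z hz => ?_
    have hfz (k : ι) : f k z = 0 := by
      have := Submodule.inner_right_of_mem_orthogonal (hadj k (f k z)) hz
      rwa [adjoint_inner_left, inner_self_eq_zero] at this
    have hzV : z ∈ V := show Summable _ by simpa only [hfz] using summable_zero
    exact Submodule.disjoint_def.1 V.orthogonal_disjoint z hzV hz
  show x ∈ V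
  exact Submodule.orthogonal_eq_bot_iff.1 hV ▸ Submodule.mem_top

end HilbertSum

namespace CotlarStein

variable {𝕜 E F ι : Type*} [RCLike 𝕜] [NormedAddCommGroup E] [InnerProductSpace 𝕜 E]
  [CompleteSpace E] [NormedAddCommGroup F] [InnerProductSpace 𝕜 F] [CompleteSpace F]
  (A : ι → E →L[𝕜] F)

noncomputable def word (l : List (ι × ι)) : E →L[𝕜] E :=
  (l.map fun p => (A p.1)† ∘L A p.2).prod

-- `weight A b [(j₁, k₁), …, (jₘ, kₘ)] ^ 2`
-- `= ‖A_b A_{j₁}†‖ ‖A_{j₁}† A_{k₁}‖ ‖A_{k₁} A_{j₂}†‖ ⋯ ‖A_{jₘ}† A_{kₘ}‖ ‖A_{kₘ}‖`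
noncomputable def weight : ι → List (ι × ι) → ℝ
  | b, [] => √‖A b‖
  | b, p :: t => √‖A b ∘L (A p.1)†‖ * √‖(A p.1)† ∘L A p.2‖ * weight p.2 t

theorem weight_nonneg : ∀ b t, 0 ≤ weight A b t
  | b, [] => Real.sqrt_nonneg _
  | b, p :: t => by have := weight_nonneg p.2 t; rw [weight]; positivity

theorem norm_comp_word_mul_norm_word_le (b : ι) (t : List (ι × ι)) :
    ‖A b ∘L word A t‖ * ‖word A t‖ ≤ weight A b t ^ 2 := by
  induction t generalizing b with
  | nil =>
    rw [weight, Real.sq_sqrt (norm_nonneg _), word, List.map_nil, List.prod_nil, one_def,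
      comp_id]
    exact mul_le_of_le_one_right (norm_nonneg _) norm_id_le
  | cons p t ih =>
    calc ‖A b ∘L word A (p :: t)‖ * ‖word A (p :: t)‖
        = ‖(A b ∘L (A p.1)†) ∘L (A p.2 ∘L word A t)‖ *
            ‖((A p.1)† ∘L A p.2) ∘L word A t‖ := rfl
      _ ≤ (‖A b ∘L (A p.1)†‖ * ‖A p.2 ∘L word A t‖) *
            (‖(A p.1)† ∘L A p.2‖ * ‖word A t‖) := by
          gcongr <;> exact opNorm_comp_le _ _
      _ = ‖A b ∘L (A p.1)†‖ * ‖(A p.1)† ∘L A p.2‖ *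
            (‖A p.2 ∘L word A t‖ * ‖word A t‖) := by
          ring
      _ ≤ ‖A b ∘L (A p.1)†‖ * ‖(A p.1)† ∘L A p.2‖ * weight A p.2 t ^ 2 := by
          gcongr; exact ih p.2
      _ = weight A b (p :: t) ^ 2 := by
          rw [weight, mul_pow, mul_pow, Real.sq_sqrt (norm_nonneg _),
            Real.sq_sqrt (norm_nonneg _)]

theorem norm_word_cons_le (p : ι × ι) (t : List (ι × ι)) :
    ‖word A (p :: t)‖ ≤ √‖A p.1‖ * √‖(A p.1)† ∘L A p.2‖ * weight A p.2 t := by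
  have hsq :
      ‖word A (p :: t)‖ ^ 2 ≤ (√‖A p.1‖ * √‖(A p.1)† ∘L A p.2‖ * weight A p.2 t) ^ 2 :=
    calc ‖word A (p :: t)‖ ^ 2
        = ‖(A p.1)† ∘L (A p.2 ∘L word A t)‖ * ‖((A p.1)† ∘L A p.2) ∘L word A t‖ := by
          rw [sq]; rfl
      _ ≤ (‖(A p.1)†‖ * ‖A p.2 ∘L word A t‖) *
            (‖(A p.1)† ∘L A p.2‖ * ‖word A t‖) := by
          gcongr <;> exact opNorm_comp_le _ _
      _ = ‖A p.1‖ * ‖(A p.1)† ∘L A p.2‖ * (‖A p.2 ∘L word A t‖ * ‖word A t‖) := by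
          rw [LinearIsometryEquiv.norm_map]; ring
      _ ≤ ‖A p.1‖ * ‖(A p.1)† ∘L A p.2‖ * weight A p.2 t ^ 2 := by
          gcongr; exact norm_comp_word_mul_norm_word_le A p.2 t
      _ = _ := by
          rw [mul_pow, mul_pow, Real.sq_sqrt (norm_nonneg _), Real.sq_sqrt (norm_nonneg _)]
  have := weight_nonneg A p.2 t
  exact (pow_le_pow_iff_left₀ (norm_nonneg _) (by positivity) two_ne_zero).1 hsq

variable {A} {S : Finset ι} {R : ℝ}

theorem norm_le_of_sum_sqrt_le (hc : ∀ j ∈ S, ∑ k ∈ S, √‖(A j)† ∘L A k‖ ≤ R) {j : ι} (hj : j ∈ S) :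
    ‖A j‖ ≤ R := by
  calc ‖A j‖ = √‖(A j)† ∘L A j‖ := by
        rw [norm_adjoint_comp_self, Real.sqrt_mul_self (norm_nonneg _)]
    _ ≤ ∑ k ∈ S, √‖(A j)† ∘L A k‖ :=
        single_le_sum (f := fun k => √‖(A j)† ∘L A k‖) (fun _ _ => Real.sqrt_nonneg _) hj
    _ ≤ R := hc j hj

theorem sum_product_mul_sqrt_le (hc : ∀ j ∈ S, ∑ k ∈ S, √‖(A j)† ∘L A k‖ ≤ R)
    {u : ι → ℝ} (hu : ∀ j, 0 ≤ u j) {K : ℝ} (hK : 0 ≤ K) :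
    ∑ p ∈ S ×ˢ S, u p.1 * √‖(A p.1)† ∘L A p.2‖ * K ≤ (∑ j ∈ S, u j) * R * K := by
  calc ∑ p ∈ S ×ˢ S, u p.1 * √‖(A p.1)† ∘L A p.2‖ * K
      = ∑ j ∈ S, u j * (∑ k ∈ S, √‖(A j)† ∘L A k‖) * K := by
        rw [sum_product]
        exact sum_congr rfl fun j _ => by rw [mul_sum, sum_mul]
    _ ≤ ∑ j ∈ S, u j * R * K := by
        gcongr with j hj
        · exact hu j
        · exact hc j hj
    _ = (∑ j ∈ S, u j) * R * K := by rw [sum_mul, sum_mul]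

theorem wordSum_weight_le (hR : 0 ≤ R) (hc : ∀ j ∈ S, ∑ k ∈ S, √‖(A j)† ∘L A k‖ ≤ R)
    (hd : ∀ j ∈ S, ∑ k ∈ S, √‖A j ∘L (A k)†‖ ≤ R) (m : ℕ) :
    ∀ b ∈ S, (S ×ˢ S).wordSum m (weight A b) ≤ R ^ (2 * m) * √R := by
  induction m with
  | zero =>
    exact fun b hb => by
      simpa [wordSum, weight] using Real.sqrt_le_sqrt (norm_le_of_sum_sqrt_le hc hb)
  | succ m ih =>
    intro b hb
    calc (S ×ˢ S).wordSum (m + 1) (weight A b)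
        = ∑ p ∈ S ×ˢ S, √‖A b ∘L (A p.1)†‖ * √‖(A p.1)† ∘L A p.2‖ *
            (S ×ˢ S).wordSum m (weight A p.2) := by
          simp only [wordSum, weight, mul_wordSum]
      _ ≤ ∑ p ∈ S ×ˢ S,
            √‖A b ∘L (A p.1)†‖ * √‖(A p.1)† ∘L A p.2‖ * (R ^ (2 * m) * √R) := by
          gcongr with p hp
          exact ih p.2 (mem_product.1 hp).2
      _ ≤ (∑ j ∈ S, √‖A b ∘L (A j)†‖) * R * (R ^ (2 * m) * √R) :=
          sum_product_mul_sqrt_le hc (u := fun j => √‖A b ∘L (A j)†‖)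
            (fun _ => Real.sqrt_nonneg _) (by positivity)
      _ ≤ R * R * (R ^ (2 * m) * √R) := by
          gcongr
          exact hd b hb
      _ = R ^ (2 * (m + 1)) * √R := by ring

theorem wordSum_norm_word_le (hR : 0 ≤ R) (hc : ∀ j ∈ S, ∑ k ∈ S, √‖(A j)† ∘L A k‖ ≤ R)
    (hd : ∀ j ∈ S, ∑ k ∈ S, √‖A j ∘L (A k)†‖ ≤ R)
    (m : ℕ) : (S ×ˢ S).wordSum (m + 1) (fun l => ‖word A l‖) ≤ #S * R ^ (2 * (m + 1)) :=
  calc (S ×ˢ S).wordSum (m + 1) (fun l => ‖word A l‖)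
      ≤ ∑ p ∈ S ×ˢ S, (S ×ˢ S).wordSum m
          (fun t => √‖A p.1‖ * √‖(A p.1)† ∘L A p.2‖ * weight A p.2 t) :=
        sum_le_sum fun p _ => wordSum_mono _ m fun t => norm_word_cons_le A p t
    _ ≤ ∑ p ∈ S ×ˢ S, √‖A p.1‖ * √‖(A p.1)† ∘L A p.2‖ * (R ^ (2 * m) * √R) := by
        gcongr with p hp
        rw [← mul_wordSum]
        gcongr
        exact wordSum_weight_le hR hc hd m p.2 (mem_product.1 hp).2
    _ ≤ (∑ j ∈ S, √‖A j‖) * R * (R ^ (2 * m) * √R) :=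
        sum_product_mul_sqrt_le hc (u := fun j => √‖A j‖) (fun _ => Real.sqrt_nonneg _)
          (by positivity)
    _ ≤ (#S * √R) * R * (R ^ (2 * m) * √R) := by
        gcongr
        rw [← nsmul_eq_mul]
        exact sum_le_card_nsmul _ _ _ fun j hj =>
          Real.sqrt_le_sqrt (norm_le_of_sum_sqrt_le hc hj)
    _ = #S * R ^ (2 * (m + 1)) := by
        linear_combination (#S * R * R ^ (2 * m) : ℝ) * Real.mul_self_sqrt hR

theorem norm_sum_le (hR : 0 ≤ R) (hc : ∀ j ∈ S, ∑ k ∈ S, √‖(A j)† ∘L A k‖ ≤ R)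
    (hd : ∀ j ∈ S, ∑ k ∈ S, √‖A j ∘L (A k)†‖ ≤ R) :
    ‖∑ j ∈ S, A j‖ ≤ R := by
  set T := ∑ j ∈ S, A j
  have hTT : T† ∘L T = ∑ p ∈ S ×ˢ S, (A p.1)† ∘L A p.2 := by
    simp only [T, map_sum adjoint, finsetSum_comp, comp_finsetSum, sum_product]
    exact sum_comm
  have hpow (n : ℕ) : (‖T‖ ^ 2) ^ 2 ^ n ≤ #S * (R ^ 2) ^ 2 ^ n := by
    obtain ⟨m, hm⟩ := Nat.exists_eq_add_one.2 (Nat.two_pow_pos n)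
    rw [← norm_adjoint_comp_self_pow_two_pow, hTT, sum_pow_eq_wordSum, ← pow_mul, hm]
    exact (norm_wordSum_le _ _ _).trans (wordSum_norm_word_le hR hc hd m)
  exact (pow_le_pow_iff_left₀ (norm_nonneg _) hR two_ne_zero).1
    (le_of_forall_pow_two_pow_le_mul_pow (sq_nonneg R) hpow)

theorem summable_apply_adjoint_apply (hsum : ∀ j, Summable fun k => √‖A j ∘L (A k)†‖)
    (hbd : ∀ j, ∑' k, √‖A j ∘L (A k)†‖ ≤ R) (k : ι) (y : F) :
    Summable fun j => A j (((A k)†) y) := by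
  refine Summable.of_norm_bounded (((hsum k).mul_left R).mul_right ‖y‖) fun j => ?_
  have hjk : √‖A j ∘L (A k)†‖ ≤ R :=
    ((hsum j).le_tsum k fun _ _ => Real.sqrt_nonneg _).trans (hbd j)
  calc ‖A j (((A k)†) y)‖ ≤ ‖A j ∘L (A k)†‖ * ‖y‖ := (A j ∘L (A k)†).le_opNorm y
    _ = √‖A j ∘L (A k)†‖ * √‖A k ∘L (A j)†‖ * ‖y‖ := by
        rw [norm_comp_adjoint_comm (A k), Real.mul_self_sqrt (norm_nonneg _)]
    _ ≤ R * √‖A k ∘L (A j)†‖ * ‖y‖ := by gcongr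

end CotlarStein

/-- Cotlar–Stein lemma: if a countable family of bounded operators between Hilbert
spaces satisfies `sup_α Σ_β ‖A_α* A_β‖^{1/2} ≤ R` and `sup_α Σ_β ‖A_α A_β*‖^{1/2} ≤ R`,
then `Σ_α A_α` converges strongly to a bounded operator of norm ≤ R. -/
theorem cotlar_stein
    {E F : Type*} [NormedAddCommGroup E] [InnerProductSpace ℂ E] [CompleteSpace E]
    [NormedAddCommGroup F] [InnerProductSpace ℂ F] [CompleteSpace F]
    (A : ℕ → E →L[ℂ] F) (R : ℝ) (hR : 0 < R)
    (hsum1 : ∀ α, Summable fun β => ‖(ContinuousLinearMap.adjoint (A α)).comp (A β)‖ ^ ((1:ℝ)/2))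
    (hbd1 : ∀ α, (∑' β, ‖(ContinuousLinearMap.adjoint (A α)).comp (A β)‖ ^ ((1:ℝ)/2)) ≤ R)
    (hsum2 : ∀ α, Summable fun β => ‖(A α).comp (ContinuousLinearMap.adjoint (A β))‖ ^ ((1:ℝ)/2))
    (hbd2 : ∀ α, (∑' β, ‖(A α).comp (ContinuousLinearMap.adjoint (A β))‖ ^ ((1:ℝ)/2)) ≤ R) :
    ∃ T : E →L[ℂ] F, (∀ x : E, HasSum (fun α => A α x) (T x)) ∧ ‖T‖ ≤ R := by
  simp only [← Real.sqrt_eq_rpow] at hsum1 hbd1 hsum2 hbd2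
  have hfin (S : Finset ℕ) : ‖∑ j ∈ S, A j‖ ≤ R :=
    CotlarStein.norm_sum_le hR.le
      (fun j _ => ((hsum1 j).sum_le_tsum S fun _ _ => Real.sqrt_nonneg _).trans (hbd1 j))
      (fun j _ => ((hsum2 j).sum_le_tsum S fun _ _ => Real.sqrt_nonneg _).trans (hbd2 j))
  exact exists_hasSum_apply_of_norm_sum_le hfin
    (summable_apply_of_summable_apply_adjoint hfin
      (CotlarStein.summable_apply_adjoint_apply hsum2 hbd2))
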